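/- arXiv:2202.03111 — 4 statements merged into one kernel-verified Lean document; each statement's English description precedes it below -/
import Mathlib

section
/- Let 0<p≤1, let A be a p-Banach *-algebra, let B be the ‖·‖-closure in A of some commutative *-subalgebra of A, and let T be an injective *-representation of A on a Hilbert space H satisfying ‖T(x)‖_op^p = lim_{n→∞} ‖x^n‖^{1/n} for every self-adjoint x ∈ B. If the identity operator I on H lies in the operator-norm closure of T(B) in B(H), then there exists e ∈ B with T(e) = I, and this e is a unit for the whole algebra A. -/
/-
Choose a self-adjoint `h ∈ B` with `‖1 - T h‖ < 1/10` and put `s = 1 - T h`, `g = h - h²`, so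
that `T g = s - s²`. The Catalan series `c(x) = ∑ Cₖ x^(k+1)` satisfies `c = x + c²`; for small
`s` this forces `c(s - s²) = s`, since `c(s - s²)` commutes with `s` and
`(c + s)(c - s) = c - s`. The same series converges in `A`: by the spectral radius hypothesis the
roots of `‖gⁿ‖` tend to `‖T g‖ᵖ < 4⁻ᵖ`, while `Cₖᵖ ≤ 4ᵏᵖ`. Moreover `‖T x‖ᵖ ≤ ‖x‖` on `B`
(spectral radius bound for `x⋆x` and the C⋆-identity), so `T` commutes with the summation and
`e = h + c(g) ∈ B` satisfies `T e = T h + s = 1`. Injectivity of `T` makes `e` a unit.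
-/

open Filter

/-- `nupow x n = x^(n+1)`: powers in a possibly non-unital algebra. -/
noncomputable def nupow {A : Type*} [Mul A] (x : A) : ℕ → A
  | 0 => x
  | n + 1 => x * nupow x n

open Finset Topology ComplexStarModule

lemma catalan_le_four_pow (n : ℕ) : catalan n ≤ 4 ^ n := by
  rw [catalan_eq_centralBinom_div]
  calc n.centralBinom / (n + 1) ≤ n.centralBinom := Nat.div_le_self _ _
    _ ≤ (2 * n + 1).choose n := Nat.choose_le_choose n (by omega)
    _ ≤ 4 ^ n := Nat.choose_middle_le_pow n

lemma Commute.eq_of_sub_mul_self_eq {R : Type*} [NormedRing R] {a b : R} (hab : Commute a b)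
    (h : a - a * a = b - b * b) (hn : ‖a + b‖ < 1) : a = b := by
  have key : (a + b) * (a - b) = a - b := by
    rw [← hab.mul_self_sub_mul_self_eq, sub_eq_sub_iff_sub_eq_sub.1 h]
  have hle : ‖a - b‖ ≤ ‖a + b‖ * ‖a - b‖ := by
    calc ‖a - b‖ = ‖(a + b) * (a - b)‖ := by rw [key]
      _ ≤ ‖a + b‖ * ‖a - b‖ := norm_mul_le _ _
  have : ‖a - b‖ = 0 := by nlinarith [norm_nonneg (a - b)]
  exact sub_eq_zero.1 (norm_eq_zero.1 this)

lemma norm_catalan_nsmul_pow_le {R : Type*} [NormedRing R] (x : R) (k : ℕ) :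
    ‖catalan k • x ^ (k + 1)‖ ≤ ‖x‖ * (4 * ‖x‖) ^ k :=
  calc ‖catalan k • x ^ (k + 1)‖ ≤ catalan k * ‖x ^ (k + 1)‖ := norm_nsmul_le
    _ ≤ 4 ^ k * ‖x‖ ^ (k + 1) := by
        gcongr
        · exact_mod_cast catalan_le_four_pow k
        · exact norm_pow_le' x k.succ_pos
    _ = ‖x‖ * (4 * ‖x‖) ^ k := by ring

lemma norm_sub_mul_self_lt {R : Type*} [NormedRing R] {s : R} (hs : ‖s‖ < 1 / 10) :
    ‖s - s * s‖ < 1 / 8 :=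
  calc ‖s - s * s‖ ≤ ‖s‖ + ‖s‖ * ‖s‖ := (norm_sub_le _ _).trans (by gcongr; exact norm_mul_le _ _)
    _ < 1 / 8 := by nlinarith [norm_nonneg s]

section CatalanSeries

variable {R : Type*} [NormedRing R]

lemma summable_norm_catalan_nsmul_pow {x : R} (hx : 4 * ‖x‖ < 1) :
    Summable fun k => ‖catalan k • x ^ (k + 1)‖ :=
  .of_nonneg_of_le (fun _ => norm_nonneg _) (norm_catalan_nsmul_pow_le x)
    ((summable_geometric_of_lt_one (by positivity) hx).mul_left _)

lemma norm_tsum_catalan_nsmul_pow_le {x : R} (hx : 4 * ‖x‖ < 1) :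
    ‖∑' k, catalan k • x ^ (k + 1)‖ ≤ ‖x‖ / (1 - 4 * ‖x‖) := by
  have hgeom := summable_geometric_of_lt_one (by positivity) hx
  calc ‖∑' k, catalan k • x ^ (k + 1)‖ ≤ ∑' k, ‖catalan k • x ^ (k + 1)‖ :=
        norm_tsum_le_tsum_norm (summable_norm_catalan_nsmul_pow hx)
    _ ≤ ∑' k, ‖x‖ * (4 * ‖x‖) ^ k :=
        (summable_norm_catalan_nsmul_pow hx).tsum_le_tsum (norm_catalan_nsmul_pow_le x)
          (hgeom.mul_left _)
    _ = ‖x‖ / (1 - 4 * ‖x‖) := by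
        rw [tsum_mul_left, tsum_geometric_of_lt_one (by positivity) hx, div_eq_mul_inv]

lemma tsum_catalan_nsmul_pow_sub_mul_self [CompleteSpace R] {x : R} (hx : 4 * ‖x‖ < 1) :
    (∑' k, catalan k • x ^ (k + 1)) - (∑' k, catalan k • x ^ (k + 1)) *
      (∑' k, catalan k • x ^ (k + 1)) = x := by
  have hsum := summable_norm_catalan_nsmul_pow hx
  have cauchy (n : ℕ) : ∑ ij ∈ antidiagonal n,
      catalan ij.1 • x ^ (ij.1 + 1) * catalan ij.2 • x ^ (ij.2 + 1) =
        catalan (n + 1) • x ^ (n + 1 + 1) := by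
    rw [catalan_succ', sum_smul]
    refine sum_congr rfl fun ij hij => ?_
    rw [HasAntidiagonal.mem_antidiagonal] at hij
    rw [smul_mul_smul_comm, ← pow_add, show ij.1 + 1 + (ij.2 + 1) = n + 1 + 1 by omega]
  rw [tsum_mul_tsum_eq_tsum_sum_antidiagonal_of_summable_norm hsum hsum, tsum_congr cauchy,
    hsum.of_norm.tsum_eq_zero_add]
  simp

lemma hasSum_catalan_nsmul_pow_sub_mul_self [CompleteSpace R] {s : R} (hs : ‖s‖ < 1 / 10) :
    HasSum (fun k => catalan k • (s - s * s) ^ (k + 1)) s := by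
  set x := s - s * s
  have hx : ‖x‖ < 1 / 8 := norm_sub_mul_self_lt hs
  have hx4 : 4 * ‖x‖ < 1 := by linarith
  suffices h : ∑' k, catalan k • x ^ (k + 1) = s from
    h ▸ (summable_norm_catalan_nsmul_pow hx4).of_norm.hasSum
  have hsx : Commute s x := (Commute.refl s).sub_right ((Commute.refl s).mul_right (.refl s))
  have hcs : Commute (∑' k, catalan k • x ^ (k + 1)) s :=
    Commute.tsum_left s fun k => ((hsx.pow_right _).smul_right _).symm
  refine hcs.eq_of_sub_mul_self_eq (tsum_catalan_nsmul_pow_sub_mul_self hx4) ?_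
  have hc : ‖x‖ / (1 - 4 * ‖x‖) ≤ 1 / 2 := by
    rw [div_le_iff₀ (by linarith)]; linarith
  calc _ ≤ ‖∑' k, catalan k • x ^ (k + 1)‖ + ‖s‖ := norm_add_le _ _
    _ < 1 := by linarith [norm_tsum_catalan_nsmul_pow_le hx4]

end CatalanSeries

lemma summable_pow_mul_of_tendsto_rpow_inv {a : ℕ → ℝ} (ha : ∀ n, 0 ≤ a n) {ρ r : ℝ}
    (hρ : 0 < ρ) (h : Tendsto (fun n : ℕ => a n ^ ((n : ℝ) + 1)⁻¹) atTop (𝓝 r))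
    (hρr : ρ * r < 1) : Summable fun n => ρ ^ n * a n := by
  obtain ⟨q, hrq, hqρ⟩ := exists_between (show r < ρ⁻¹ by simpa using (lt_inv_mul_iff₀ hρ).2 hρr)
  have hq : 0 ≤ q := (ge_of_tendsto' h fun n => Real.rpow_nonneg (ha n) _).trans hrq.le
  have hρq : ρ * q < 1 := (lt_inv_mul_iff₀ hρ).1 (by rwa [mul_one])
  have hbound : ∀ᶠ n in atTop, a n ≤ q ^ (n + 1) := by
    filter_upwards [h.eventually (gt_mem_nhds hrq)] with n hn
    rw [Real.rpow_inv_lt_iff_of_pos (ha n) hq (by positivity),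
      show (n : ℝ) + 1 = ((n + 1 : ℕ) : ℝ) by push_cast; rfl, Real.rpow_natCast] at hn
    exact hn.le
  refine .of_norm_bounded_eventually_nat
    ((summable_geometric_of_lt_one (by positivity) hρq).mul_left q) ?_
  filter_upwards [hbound] with n hn
  rw [Real.norm_of_nonneg (by positivity [ha n])]
  calc ρ ^ n * a n ≤ ρ ^ n * q ^ (n + 1) := by gcongr
    _ = q * (ρ * q) ^ n := by ring

lemma nupow_mem {A S : Type*} [Mul A] [SetLike S A] [MulMemClass S A] {B : S} {x : A}
    (hx : x ∈ B) : ∀ n, nupow x n ∈ B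
  | 0 => hx
  | n + 1 => mul_mem hx (nupow_mem hx n)

lemma map_nupow {A M F : Type*} [Mul A] [Monoid M] [FunLike F A M] [MulHomClass F A M] (f : F)
    (x : A) : ∀ n, f (nupow x n) = f x ^ (n + 1)
  | 0 => (pow_one _).symm
  | n + 1 => by rw [nupow, map_mul, map_nupow f x n, ← pow_succ']

lemma norm_nupow_le {A : Type*} [NonUnitalSeminormedRing A] (x : A) :
    ∀ n, ‖nupow x n‖ ≤ ‖x‖ ^ (n + 1)
  | 0 => by rw [nupow, pow_one]
  | n + 1 => (norm_mul_le _ _).trans <| by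
      rw [pow_succ' ‖x‖ (n + 1)]; gcongr; exact norm_nupow_le x n

lemma le_norm_of_tendsto_nupow_root {A : Type*} [NonUnitalSeminormedRing A] {x : A} {r : ℝ}
    (h : Tendsto (fun n : ℕ => ‖nupow x n‖ ^ ((n : ℝ) + 1)⁻¹) atTop (𝓝 r)) : r ≤ ‖x‖ := by
  refine le_of_tendsto' h fun n => ?_
  rw [Real.rpow_inv_le_iff_of_pos (norm_nonneg _) (norm_nonneg _) (by positivity),
    show (n : ℝ) + 1 = ((n + 1 : ℕ) : ℝ) by push_cast; rfl, Real.rpow_natCast]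
  exact norm_nupow_le x n

lemma continuousConstSMul_of_norm_smul_eq {p : ℝ} {𝕜 E : Type*} [Norm 𝕜] [Monoid 𝕜]
    [SeminormedAddCommGroup E] [DistribMulAction 𝕜 E]
    (hsmul : ∀ (c : 𝕜) (x : E), ‖c • x‖ = ‖c‖ ^ p * ‖x‖) : ContinuousConstSMul 𝕜 E :=
  ⟨fun c => (LipschitzWith.of_dist_le' (K := ‖c‖ ^ p) fun x y => by
    rw [dist_eq_norm, dist_eq_norm, ← smul_sub, hsmul]).continuous⟩

lemma summable_catalan_nsmul_nupow {p : ℝ} (hp : 0 < p) {A : Type*} [NonUnitalNormedRing A]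
    [Module ℂ A] [CompleteSpace A] (hsmul : ∀ (c : ℂ) (x : A), ‖c • x‖ = ‖c‖ ^ p * ‖x‖)
    {x : A} {r : ℝ} (hr : 0 ≤ r) (hr4 : 4 * r < 1)
    (hx : Tendsto (fun n : ℕ => ‖nupow x n‖ ^ ((n : ℝ) + 1)⁻¹) atTop (𝓝 (r ^ p))) :
    Summable fun k => catalan k • nupow x k := by
  have hroot : Summable fun k => ((4 : ℝ) ^ p) ^ k * ‖nupow x k‖ :=
    summable_pow_mul_of_tendsto_rpow_inv (fun _ => norm_nonneg _) (by positivity) hx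
      (by rw [← Real.mul_rpow (by norm_num) hr]; exact Real.rpow_lt_one (by positivity) hr4 hp)
  refine .of_norm (hroot.of_nonneg_of_le (fun _ => norm_nonneg _) fun k => ?_)
  rw [← Nat.cast_smul_eq_nsmul ℂ, hsmul, Complex.norm_natCast, Real.rpow_pow_comm (by norm_num)]
  gcongr
  exact_mod_cast catalan_le_four_pow k

lemma realPart_mem {A : Type*} [NonUnitalRing A] [Module ℂ A] [StarRing A] [StarModule ℂ A]
    {B : NonUnitalStarSubalgebra ℂ A} {b : A} (hb : b ∈ B) : (ℜ b : A) ∈ B := by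
  rw [realPart_apply_coe, ← Complex.coe_smul]
  exact SMulMemClass.smul_mem _ (add_mem hb (star_mem hb))

lemma norm_one_sub_realPart_le {C : Type*} [NormedRing C] [StarRing C] [NormedAlgebra ℂ C]
    [StarModule ℂ C] [NormedStarGroup C] (a : C) : ‖1 - (ℜ a : C)‖ ≤ ‖1 - a‖ := by
  have hre : 1 - (ℜ a : C) = ℜ (1 - a) := by simp
  exact hre ▸ realPart.norm_le (1 - a)

section Representation

variable {p : ℝ}

lemma rpow_norm_map_le_of_tendsto {A C F S : Type*} [NonUnitalNormedRing A] [StarRing A]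
    [NormedStarGroup A] [NonUnitalNormedRing C] [StarRing C] [CStarRing C] [FunLike F A C]
    [NonUnitalRingHomClass F A C] [StarHomClass F A C] [SetLike S A] [MulMemClass S A]
    [StarMemClass S A] (T : F) {B : S}
    (hlim : ∀ x ∈ B, star x = x →
      Tendsto (fun n : ℕ => ‖nupow x n‖ ^ ((n : ℝ) + 1)⁻¹) atTop (𝓝 (‖T x‖ ^ p)))
    {x : A} (hx : x ∈ B) : ‖T x‖ ^ p ≤ ‖x‖ := by
  have key : (‖T x‖ ^ p) ^ 2 ≤ ‖x‖ ^ 2 :=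
    calc (‖T x‖ ^ p) ^ 2 = ‖T (star x * x)‖ ^ p := by
          rw [map_mul, map_star, CStarRing.norm_star_mul_self, Real.rpow_pow_comm (norm_nonneg _),
            sq]
      _ ≤ ‖star x * x‖ := le_norm_of_tendsto_nupow_root
          (hlim _ (mul_mem (star_mem hx) hx) (IsSelfAdjoint.star_mul_self x))
      _ ≤ ‖x‖ ^ 2 := (norm_mul_le _ _).trans_eq (by rw [norm_star, sq])
  exact (pow_le_pow_iff_left₀ (by positivity) (norm_nonneg _) two_ne_zero).1 key

variable {E G F S : Type*} [SeminormedAddCommGroup E] [SeminormedAddCommGroup G] [FunLike F E G]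
  [AddMonoidHomClass F E G] [SetLike S E] [AddSubgroupClass S E] (T : F) {B : S}

lemma tendsto_map_of_rpow_norm_le (hp : 0 < p) (hT : ∀ x ∈ B, ‖T x‖ ^ p ≤ ‖x‖) {ι : Type*}
    {l : Filter ι} {u : ι → E} {a : E} (hu : ∀ᶠ i in l, u i ∈ B) (ha : a ∈ B)
    (h : Tendsto u l (𝓝 a)) : Tendsto (fun i => T (u i)) l (𝓝 (T a)) := by
  rw [tendsto_iff_norm_sub_tendsto_zero] at h ⊢
  have hlim : Tendsto (fun i => ‖u i - a‖ ^ p⁻¹) l (𝓝 0) := by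
    simpa [Real.zero_rpow (inv_ne_zero hp.ne')] using h.rpow_const (Or.inr (inv_nonneg.2 hp.le))
  refine squeeze_zero' (Eventually.of_forall fun _ => norm_nonneg _) ?_ hlim
  filter_upwards [hu] with i hi
  rw [← map_sub, Real.le_rpow_inv_iff_of_pos (norm_nonneg _) (norm_nonneg _) hp]
  exact hT _ (sub_mem hi ha)

lemma HasSum.map_of_rpow_norm_le (hp : 0 < p) (hT : ∀ x ∈ B, ‖T x‖ ^ p ≤ ‖x‖) {ι : Type*}
    {f : ι → E} {a : E} (hf : HasSum f a) (hfB : ∀ i, f i ∈ B) (ha : a ∈ B) :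
    HasSum (fun i => T (f i)) (T a) := by
  simpa only [HasSum, map_sum] using tendsto_map_of_rpow_norm_le T hp hT
    (Eventually.of_forall fun s => sum_mem fun i _ => hfB i) ha hf

end Representation

theorem unit_lemma_for_pBanach_algebras_general
    (p : ℝ) (hp0 : 0 < p)
    {A : Type*} [NonUnitalRing A] [Module ℂ A] [SMulCommClass ℂ A A] [IsScalarTower ℂ A A]
    [StarRing A] [StarModule ℂ A] [MetricSpace A] [CompleteSpace A]
    (nrm : A → ℝ)
    (hsmul : ∀ (c : ℂ) (x : A), nrm (c • x) = ‖c‖ ^ p * nrm x)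
    (hmulle : ∀ x y : A, nrm (x * y) ≤ nrm x * nrm y)
    (hstar : ∀ x : A, nrm (star x) = nrm x)
    (hdist : ∀ x y : A, dist x y = nrm (x - y))
    {H : Type*} [NormedAddCommGroup H] [InnerProductSpace ℂ H] [CompleteSpace H]
    (T : A →⋆ₙₐ[ℂ] (H →L[ℂ] H)) (hinj : Function.Injective T)
    (S : NonUnitalStarSubalgebra ℂ A)
    (hlim : ∀ x ∈ closure (S : Set A), star x = x →
      Tendsto (fun n : ℕ => nrm (nupow x n) ^ (((n : ℝ) + 1)⁻¹)) atTop (nhds (‖T x‖ ^ p)))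
    (hI : (1 : H →L[ℂ] H) ∈ closure (T '' (closure (S : Set A)))) :
    ∃ e ∈ closure (S : Set A), T e = 1 ∧ ∀ a : A, e * a = a ∧ a * e = a := by
  -- Mathlib's normed groups need no homogeneity and take positivity and the triangle inequality
  -- from the metric, so `nrm` is a norm in their sense.
  let : NonUnitalNormedRing A :=
    { ‹NonUnitalRing A›, ‹MetricSpace A› with
      norm := nrm
      dist_eq := fun x y => by rw [dist_comm, hdist, neg_add_eq_sub]
      norm_mul_le := hmulle }
  have : NormedStarGroup A := ⟨fun x => (hstar x).le⟩
  have : ContinuousConstSMul ℂ A := continuousConstSMul_of_norm_smul_eq hsmul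
  set B := S.topologicalClosure
  have hBc : IsClosed (B : Set A) := S.isClosed_topologicalClosure
  have hT : ∀ x ∈ B, ‖T x‖ ^ p ≤ ‖x‖ := fun x => rpow_norm_map_le_of_tendsto T hlim
  obtain ⟨_, ⟨b, hb, rfl⟩, hTb⟩ := Metric.mem_closure_iff.1 hI (1 / 10) (by norm_num)
  obtain ⟨h, hhB, hhsa, hs⟩ : ∃ h ∈ B, star h = h ∧ ‖1 - T h‖ < 1 / 10 :=
    ⟨ℜ b, realPart_mem hb, (ℜ b).2, by
      rw [map_realPart]; exact (norm_one_sub_realPart_le _).trans_lt (by rwa [← dist_eq_norm])⟩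
  set s := 1 - T h
  set g := h - h * h
  have hgB : g ∈ B := sub_mem hhB (mul_mem hhB hhB)
  have hgsa : star g = g := by simp only [g, star_sub, star_mul, hhsa]
  have hTg : T g = s - s * s := by simp only [g, s, map_sub, map_mul]; noncomm_ring
  have hsum := summable_catalan_nsmul_nupow hp0 hsmul (norm_nonneg (T g))
    (by rw [hTg]; linarith [norm_sub_mul_self_lt hs]) (hlim g hgB hgsa)
  have htermB (k : ℕ) : catalan k • nupow g k ∈ B := nsmul_mem (nupow_mem hgB k) _
  have hTsum : T (∑' k, catalan k • nupow g k) = s := by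
    refine (hsum.hasSum.map_of_rpow_norm_le T hp0 hT htermB (tsum_mem hBc htermB)).unique ?_
    simp_rw [map_nsmul, map_nupow, hTg]
    exact hasSum_catalan_nsmul_pow_sub_mul_self hs
  have hTe : T (h + ∑' k, catalan k • nupow g k) = 1 := by rw [map_add, hTsum, add_sub_cancel]
  refine ⟨_, add_mem hhB (tsum_mem hBc htermB), hTe, fun a => ⟨?_, ?_⟩⟩
  · exact hinj (by rw [map_mul, hTe, one_mul])
  · exact hinj (by rw [map_mul, hTe, mul_one])

/-- Let `0 < p ≤ 1`, `A` a `p`-Banach `*`-algebra, `B` the closure of a commutative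
`*`-subalgebra `S` of `A`, and `T` an injective `*`-representation of `A` on a Hilbert
space `H` with `‖T x‖^p = lim ‖x^n‖^(1/n)` for all self-adjoint `x ∈ B`.  If the identity
operator lies in the operator-norm closure of `T(B)`, then there is `e ∈ B` with `T e = 1`
and `e` is a unit of all of `A`. -/
theorem unit_lemma_for_pBanach_algebras
    (p : ℝ) (hp0 : 0 < p) (hp1 : p ≤ 1)
    {A : Type*} [NonUnitalRing A] [Module ℂ A] [SMulCommClass ℂ A A] [IsScalarTower ℂ A A]
    [StarRing A] [StarModule ℂ A] [MetricSpace A] [CompleteSpace A]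
    (nrm : A → ℝ)
    (hnonneg : ∀ x : A, 0 ≤ nrm x)
    (hzero : ∀ x : A, nrm x = 0 ↔ x = 0)
    (hadd : ∀ x y : A, nrm (x + y) ≤ nrm x + nrm y)
    (hsmul : ∀ (c : ℂ) (x : A), nrm (c • x) = ‖c‖ ^ p * nrm x)
    (hmulle : ∀ x y : A, nrm (x * y) ≤ nrm x * nrm y)
    (hstar : ∀ x : A, nrm (star x) = nrm x)
    (hdist : ∀ x y : A, dist x y = nrm (x - y))
    {H : Type*} [NormedAddCommGroup H] [InnerProductSpace ℂ H] [CompleteSpace H]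
    (T : A →⋆ₙₐ[ℂ] (H →L[ℂ] H)) (hinj : Function.Injective T)
    (S : NonUnitalStarSubalgebra ℂ A)
    (hcomm : ∀ x ∈ S, ∀ y ∈ S, x * y = y * x)
    (hlim : ∀ x ∈ closure (S : Set A), star x = x →
      Tendsto (fun n : ℕ => nrm (nupow x n) ^ (((n : ℝ) + 1)⁻¹)) atTop (nhds (‖T x‖ ^ p)))
    (hI : (1 : H →L[ℂ] H) ∈ closure (T '' (closure (S : Set A)))) :
    ∃ e ∈ closure (S : Set A), T e = 1 ∧ ∀ a : A, e * a = a ∧ a * e = a :=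
  unit_lemma_for_pBanach_algebras_general p hp0 nrm hsmul hmulle hstar hdist T hinj S hlim hI
end

section
/- Let 0<p≤1, and for 0<ε≤1 define the weight ω_ε(x,y) = (1+ε·d(x,y))^{δ₀} on G×G and the corresponding norm ‖K‖_{pω_ε} = max{ sup_x Σ_y |K(x,y)|^p ω_ε(x,y)^p , sup_y Σ_x |K(x,y)|^p ω_ε(x,y)^p }. Then for every K ∈ A_{pω}, one has lim_{ε→0^+} ‖K‖_{pω_ε} = ‖K‖_p. -/
open scoped ENNReal NNReal
open Filter

/-- The unweighted Schur-type `p`-norm of a kernel `K` on `G × G`,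
`‖K‖_p = max{ sup_x Σ_y |K(x,y)|^p , sup_y Σ_x |K(x,y)|^p }` (valued in `ℝ≥0∞`). -/
noncomputable def knorm {G : Type*} (p : ℝ) (K : G → G → ℂ) : ℝ≥0∞ :=
  max (⨆ x : G, ∑' y : G, (‖K x y‖₊ : ℝ≥0∞) ^ p)
      (⨆ y : G, ∑' x : G, (‖K x y‖₊ : ℝ≥0∞) ^ p)

/-- The weighted Schur-type `p`-norm of a kernel `K`, with weight
`ω(x,y) = (1 + d(x,y))^δ₀`. -/
noncomputable def wknorm {G : Type*} [MetricSpace G] (p δ₀ : ℝ) (K : G → G → ℂ) : ℝ≥0∞ :=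
  max (⨆ x : G, ∑' y : G,
        (‖K x y‖₊ : ℝ≥0∞) ^ p * ENNReal.ofReal ((1 + dist x y) ^ δ₀) ^ p)
      (⨆ y : G, ∑' x : G,
        (‖K x y‖₊ : ℝ≥0∞) ^ p * ENNReal.ofReal ((1 + dist x y) ^ δ₀) ^ p)

/-- Convolution of kernels: `(K ⋆ J)(x,y) = Σ_z K(x,z) J(z,y)`. -/
noncomputable def kconv {G : Type*} (K J : G → G → ℂ) : G → G → ℂ :=
  fun x y => ∑' z : G, K x z * J z y

/-- `kconvpow K n` is the `(n+1)`-fold convolution power `K^{⋆(n+1)}`. -/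
noncomputable def kconvpow {G : Type*} (K : G → G → ℂ) : ℕ → G → G → ℂ
  | 0 => K
  | n + 1 => kconv K (kconvpow K n)

/-- The growth assumption on the metric space `G` with counting measure: every closed
ball of radius `δ` is finite with at most `C·δ^b` elements. -/
def BallGrowth {G : Type*} [MetricSpace G] (C b : ℝ) : Prop :=
  ∀ (x : G) (δ : ℝ), 0 < δ →
    {y : G | dist x y ≤ δ}.Finite ∧ (({y : G | dist x y ≤ δ}.ncard : ℝ) ≤ C * δ ^ b)

/-- The weighted Schur-type `p`-norm with weight `ω_ε(x,y) = (1 + ε d(x,y))^δ₀`. -/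
noncomputable def wknormEps {G : Type*} [MetricSpace G] (p δ₀ ε : ℝ) (K : G → G → ℂ) : ℝ≥0∞ :=
  max (⨆ x : G, ∑' y : G,
        (‖K x y‖₊ : ℝ≥0∞) ^ p * ENNReal.ofReal ((1 + ε * dist x y) ^ δ₀) ^ p)
      (⨆ y : G, ∑' x : G,
        (‖K x y‖₊ : ℝ≥0∞) ^ p * ENNReal.ofReal ((1 + ε * dist x y) ^ δ₀) ^ p)

/-- For every `K ∈ A_{pω}`, `lim_{ε→0⁺} ‖K‖_{pω_ε} = ‖K‖_p`. -/
theorem tendsto_wknormEps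
    {G : Type*} [MetricSpace G] (C b : ℝ) (hC : 0 < C) (hb : 0 < b)
    (hball : BallGrowth (G := G) C b)
    (p : ℝ) (hp0 : 0 < p) (hp1 : p ≤ 1) (δ₀ : ℝ) (hδ₀ : 0 < δ₀) (hδ₁ : δ₀ ≤ 1)
    (K : G → G → ℂ) (hK : wknorm p δ₀ K < ⊤) :
    Tendsto (fun ε : ℝ => wknormEps p δ₀ ε K)
      (nhdsWithin 0 (Set.Ioc (0 : ℝ) 1)) (nhds (knorm p K)) := by
  set q : ℝ := δ₀ * p with hqdef
  have hq0 : 0 < q := mul_pos hδ₀ hp0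
  have hq1 : q ≤ 1 := by
    calc q = δ₀ * p := rfl
    _ ≤ 1 * 1 := mul_le_mul hδ₁ hp1 hp0.le zero_le_one
    _ = 1 := one_mul 1
  -- rewrite the ε-weight in ENNReal form
  have hw : ∀ (ε : ℝ), 0 ≤ ε → ∀ x y : G,
      ENNReal.ofReal ((1 + ε * dist x y) ^ δ₀) ^ p
        = (1 + ENNReal.ofReal ε * ENNReal.ofReal (dist x y)) ^ q := by
    intro ε hε x y
    have hd : (0 : ℝ) ≤ dist x y := dist_nonneg
    rw [← ENNReal.ofReal_rpow_of_nonneg (by positivity) hδ₀.le, ← ENNReal.rpow_mul,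
      ENNReal.ofReal_add one_pos.le (by positivity), ENNReal.ofReal_one,
      ENNReal.ofReal_mul hε]
  -- rewrite the fixed weight in ENNReal form
  have hw1 : ∀ x y : G,
      ENNReal.ofReal ((1 + dist x y) ^ δ₀) ^ p
        = (1 + ENNReal.ofReal (dist x y)) ^ q := by
    intro x y
    have hd : (0 : ℝ) ≤ dist x y := dist_nonneg
    rw [← ENNReal.ofReal_rpow_of_nonneg (by positivity) hδ₀.le, ← ENNReal.rpow_mul,
      ENNReal.ofReal_add one_pos.le hd, ENNReal.ofReal_one]
  -- pointwise key estimate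
  have key : ∀ (e D : ℝ≥0∞),
      (1 + e * D) ^ q ≤ 1 + e ^ q * (1 + D) ^ q := by
    intro e D
    calc (1 + e * D) ^ q ≤ 1 ^ q + (e * D) ^ q :=
          ENNReal.rpow_add_le_add_rpow 1 (e * D) hq0.le hq1
    _ = 1 + e ^ q * D ^ q := by
          rw [ENNReal.one_rpow, ENNReal.mul_rpow_of_nonneg _ _ hq0.le]
    _ ≤ 1 + e ^ q * (1 + D) ^ q := by
          gcongr
          exact le_add_self
  -- generic sum estimate
  have hsum : ∀ (e : ℝ≥0∞) (f D : G → ℝ≥0∞),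
      (∑' z, f z * (1 + e * D z) ^ q)
        ≤ (∑' z, f z) + e ^ q * ∑' z, f z * (1 + D z) ^ q := by
    intro e f D
    calc (∑' z, f z * (1 + e * D z) ^ q)
        ≤ ∑' z, (f z + e ^ q * (f z * (1 + D z) ^ q)) := by
          refine ENNReal.tsum_le_tsum fun z => ?_
          calc f z * (1 + e * D z) ^ q
              ≤ f z * (1 + e ^ q * (1 + D z) ^ q) := mul_le_mul_right (key e (D z)) _
          _ = f z + e ^ q * (f z * (1 + D z) ^ q) := by ring
    _ = (∑' z, f z) + e ^ q * ∑' z, f z * (1 + D z) ^ q := by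
          rw [ENNReal.tsum_add, ENNReal.tsum_mul_left]
  -- upper bound
  have upper : ∀ ε ∈ Set.Ioc (0 : ℝ) 1,
      wknormEps p δ₀ ε K ≤ knorm p K + ENNReal.ofReal (ε ^ q) * wknorm p δ₀ K := by
    intro ε hε
    have hεq : ENNReal.ofReal (ε ^ q) = ENNReal.ofReal ε ^ q :=
      (ENNReal.ofReal_rpow_of_nonneg hε.1.le hq0.le).symm
    rw [hεq]
    have h1 : ∀ (f : G → G → ℂ) (hcomp : ∀ u, ∑' v, (‖f u v‖₊ : ℝ≥0∞) ^ p ≤ knorm p K)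
        (hcomp2 : ∀ u, (∑' v, (‖f u v‖₊ : ℝ≥0∞) ^ p
            * ENNReal.ofReal ((1 + dist u v) ^ δ₀) ^ p) ≤ wknorm p δ₀ K)
        (hwsym : ∀ u v : G, ENNReal.ofReal ((1 + ε * dist u v) ^ δ₀) ^ p
            = (1 + ENNReal.ofReal ε * ENNReal.ofReal (dist u v)) ^ q)
        (hwsym1 : ∀ u v : G, ENNReal.ofReal ((1 + dist u v) ^ δ₀) ^ p
            = (1 + ENNReal.ofReal (dist u v)) ^ q),
        (⨆ u : G, ∑' v : G, (‖f u v‖₊ : ℝ≥0∞) ^ p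
            * ENNReal.ofReal ((1 + ε * dist u v) ^ δ₀) ^ p)
          ≤ knorm p K + ENNReal.ofReal ε ^ q * wknorm p δ₀ K := by
      intro f hcomp hcomp2 hwsym hwsym1
      refine iSup_le fun u => ?_
      calc (∑' v : G, (‖f u v‖₊ : ℝ≥0∞) ^ p
              * ENNReal.ofReal ((1 + ε * dist u v) ^ δ₀) ^ p)
          = ∑' v : G, (‖f u v‖₊ : ℝ≥0∞) ^ p
              * (1 + ENNReal.ofReal ε * ENNReal.ofReal (dist u v)) ^ q := by
            exact tsum_congr fun v => by rw [hwsym u v]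
      _ ≤ (∑' v : G, (‖f u v‖₊ : ℝ≥0∞) ^ p)
            + ENNReal.ofReal ε ^ q * ∑' v : G, (‖f u v‖₊ : ℝ≥0∞) ^ p
              * (1 + ENNReal.ofReal (dist u v)) ^ q :=
            hsum (ENNReal.ofReal ε) _ _
      _ ≤ knorm p K + ENNReal.ofReal ε ^ q * wknorm p δ₀ K := by
            refine add_le_add (hcomp u) (mul_le_mul_right ?_ _)
            calc (∑' v : G, (‖f u v‖₊ : ℝ≥0∞) ^ p * (1 + ENNReal.ofReal (dist u v)) ^ q)
                = ∑' v : G, (‖f u v‖₊ : ℝ≥0∞) ^ p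
                    * ENNReal.ofReal ((1 + dist u v) ^ δ₀) ^ p :=
                  tsum_congr fun v => by rw [hwsym1 u v]
            _ ≤ wknorm p δ₀ K := hcomp2 u
    refine max_le ?_ ?_
    · exact h1 K
        (fun u => le_trans (le_iSup (fun x => ∑' y : G, (‖K x y‖₊ : ℝ≥0∞) ^ p) u)
          (le_max_left _ _))
        (fun u => le_trans (le_iSup (fun x => ∑' y : G, (‖K x y‖₊ : ℝ≥0∞) ^ p
          * ENNReal.ofReal ((1 + dist x y) ^ δ₀) ^ p) u) (le_max_left _ _))
        (hw ε hε.1.le) hw1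
    · have := h1 (fun u v => K v u)
        (fun u => le_trans (le_iSup (fun y => ∑' x : G, (‖K x y‖₊ : ℝ≥0∞) ^ p) u)
          (le_max_right _ _))
        (fun u => by
          refine le_trans (le_of_eq (tsum_congr fun v => by rw [dist_comm u v]))
            (le_trans (le_iSup (fun y => ∑' x : G, (‖K x y‖₊ : ℝ≥0∞) ^ p
              * ENNReal.ofReal ((1 + dist x y) ^ δ₀) ^ p) u) (le_max_right _ _)))
        (fun u v => by rw [dist_comm u v]; exact hw ε hε.1.le v u)
        (fun u v => by rw [dist_comm u v]; exact hw1 v u)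
      refine le_trans (le_of_eq ?_) this
      exact iSup_congr fun u => tsum_congr fun v => by rw [dist_comm u v]
  -- lower bound
  have lower : ∀ ε ∈ Set.Ioc (0 : ℝ) 1, knorm p K ≤ wknormEps p δ₀ ε K := by
    intro ε hε
    have hW : ∀ x y : G, (1 : ℝ≥0∞) ≤ ENNReal.ofReal ((1 + ε * dist x y) ^ δ₀) ^ p := by
      intro x y
      have h1 : (1 : ℝ) ≤ (1 + ε * dist x y) ^ δ₀ :=
        Real.one_le_rpow (by nlinarith [dist_nonneg (x := x) (y := y), hε.1.le]) hδ₀.le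
      calc (1 : ℝ≥0∞) = 1 ^ p := (ENNReal.one_rpow p).symm
      _ ≤ ENNReal.ofReal ((1 + ε * dist x y) ^ δ₀) ^ p := by
          refine ENNReal.rpow_le_rpow ?_ hp0.le
          simpa using ENNReal.ofReal_le_ofReal h1
    refine max_le_max ?_ ?_ <;>
      exact iSup_mono fun u => ENNReal.tsum_le_tsum fun v =>
        le_mul_of_one_le_right' (hW _ _)
  -- the upper bound tends to knorm
  have hlim : Tendsto (fun ε : ℝ => knorm p K + ENNReal.ofReal (ε ^ q) * wknorm p δ₀ K)
      (nhdsWithin 0 (Set.Ioc (0 : ℝ) 1)) (nhds (knorm p K)) := by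
    have h1 : Tendsto (fun ε : ℝ => ε ^ q) (nhdsWithin 0 (Set.Ioc (0 : ℝ) 1)) (nhds 0) := by
      have := (Real.continuousAt_rpow_const 0 q (Or.inr hq0.le)).tendsto
      rw [Real.zero_rpow hq0.ne'] at this
      exact this.mono_left nhdsWithin_le_nhds
    have h2 : Tendsto (fun ε : ℝ => ENNReal.ofReal (ε ^ q))
        (nhdsWithin 0 (Set.Ioc (0 : ℝ) 1)) (nhds 0) := by
      simpa using ENNReal.tendsto_ofReal h1
    have h3 : Tendsto (fun ε : ℝ => ENNReal.ofReal (ε ^ q) * wknorm p δ₀ K)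
        (nhdsWithin 0 (Set.Ioc (0 : ℝ) 1)) (nhds 0) := by
      simpa using ENNReal.Tendsto.mul_const h2 (Or.inr hK.ne)
    simpa using tendsto_const_nhds.add h3
  refine tendsto_of_tendsto_of_tendsto_of_le_of_le' tendsto_const_nhds hlim ?_ ?_
  · exact eventually_mem_nhdsWithin.mono fun ε hε => lower ε hε
  · exact eventually_mem_nhdsWithin.mono fun ε hε => upper ε hε
end

section
/- Let ω be an unbounded admissible weight on ℝ^d. Then there exists a sequence of admissible weights (ω_n)_{n∈ℕ} on ℝ^d such that (i) ω_{n+1}(x) ≤ ω_n(x) ≤ ω(x) for all n∈ℕ and all x, (ii) for each n there is a constant c_n > 0 with ω(x) ≤ c_n ω_n(x) for all x, and (iii) ω_n → 1 as n→∞ uniformly on compact subsets of ℝ^d. -/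
open scoped ENNReal NNReal
open Filter

/-- An admissible weight on `ℝ^d`: `ω(x) = e^{ρ(|x|)}` for some norm `|·|` on `ℝ^d` and a
continuous concave `ρ : [0,∞) → [0,∞)` with `ρ(0) = 0`, satisfying the GRS-condition
`lim_n ω(nx)^{1/n} = 1` for every `x`. -/
def IsAdmissibleWeight {d : ℕ} (ω : (Fin d → ℝ) → ℝ) : Prop :=
  (∃ (N : (Fin d → ℝ) → ℝ) (ρ : ℝ → ℝ),
    (∀ x, 0 ≤ N x) ∧ (∀ x, N x = 0 ↔ x = 0) ∧
    (∀ x y, N (x + y) ≤ N x + N y) ∧ (∀ (c : ℝ) (x), N (c • x) = |c| * N x) ∧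
    ContinuousOn ρ (Set.Ici 0) ∧ ConcaveOn ℝ (Set.Ici 0) ρ ∧
    ρ 0 = 0 ∧ (∀ t : ℝ, 0 ≤ t → 0 ≤ ρ t) ∧
    (∀ x, ω x = Real.exp (ρ (N x)))) ∧
  (∀ x, Filter.Tendsto (fun n : ℕ => ω ((n : ℝ) • x) ^ ((n : ℝ)⁻¹)) Filter.atTop (nhds 1))

/-- The weak growth condition: `ω(x) ≥ C (1 + |x|)^δ` for some `C > 0`, `0 < δ ≤ 1`. -/
def WeakGrowth {d : ℕ} (ω : (Fin d → ℝ) → ℝ) : Prop :=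
  ∃ C : ℝ, 0 < C ∧ ∃ δ : ℝ, 0 < δ ∧ δ ≤ 1 ∧ ∀ x, C * (1 + ‖x‖) ^ δ ≤ ω x

/-- The canonical embedding `ℤ^d → ℝ^d`. -/
def zr {d : ℕ} (k : Fin d → ℤ) : Fin d → ℝ := fun i => (k i : ℝ)

/-- The weighted Schur-type `p`-norm of an infinite matrix `A = (a_{kl})_{k,l ∈ ℤ^d}` with
respect to a weight `ν` on `ℤ^d` (valued in `ℝ≥0∞`):
`max{ sup_k Σ_l |a_{kl}|^p ν(k−l)^p , sup_l Σ_k |a_{kl}|^p ν(k−l)^p }`. -/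
noncomputable def mnorm {d : ℕ} (p : ℝ) (ν : (Fin d → ℤ) → ℝ)
    (A : (Fin d → ℤ) → (Fin d → ℤ) → ℂ) : ℝ≥0∞ :=
  max (⨆ k : Fin d → ℤ, ∑' l : Fin d → ℤ,
        (‖A k l‖₊ : ℝ≥0∞) ^ p * ENNReal.ofReal (ν (k - l)) ^ p)
      (⨆ l : Fin d → ℤ, ∑' k : Fin d → ℤ,
        (‖A k l‖₊ : ℝ≥0∞) ^ p * ENNReal.ofReal (ν (k - l)) ^ p)

/-- Product of infinite matrices: `(A ⋆ B)_{kl} = Σ_j a_{kj} b_{jl}`. -/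
noncomputable def matmul {d : ℕ} (A B : (Fin d → ℤ) → (Fin d → ℤ) → ℂ) :
    (Fin d → ℤ) → (Fin d → ℤ) → ℂ :=
  fun k l => ∑' j : Fin d → ℤ, A k j * B j l

/-- `matpow A n` is the `(n+1)`-fold matrix power `A^{n+1}`. -/
noncomputable def matpow {d : ℕ} (A : (Fin d → ℤ) → (Fin d → ℤ) → ℂ) :
    ℕ → (Fin d → ℤ) → (Fin d → ℤ) → ℂ
  | 0 => A
  | n + 1 => matmul A (matpow A n)

/-! With `ω = exp ∘ ρ ∘ N`, take `ωₙ = exp ∘ ρₙ ∘ N` for the truncated profiles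
`ρₙ t = min (ρ t) (t / (n + 1))`. These stay concave, and `1 ≤ ωₙ ≤ ω` passes the GRS-condition
on to `ωₙ`. On a compact set `N ≤ R`, so `ωₙ ≤ exp (R / (n + 1)) → 1` uniformly. Unboundedness
provides a point `x₀ ≠ 0`, along which the GRS-condition says `ρ (n N x₀) / n → 0`; as
`t ↦ ρ t / t` is antitone, `ρ t ≤ t / (n + 1) + Cₙ` for all `t ≥ 0`, i.e. `ω ≤ e^{Cₙ} ωₙ`. -/

open Set Topology

structure IsNormFunction {E : Type*} [AddCommGroup E] [Module ℝ E] (N : E → ℝ) : Prop where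
  nonneg : ∀ x, 0 ≤ N x
  eq_zero_iff : ∀ x, N x = 0 ↔ x = 0
  add_le : ∀ x y, N (x + y) ≤ N x + N y
  smul : ∀ (c : ℝ) x, N (c • x) = |c| * N x

structure IsWeightProfile (ρ : ℝ → ℝ) : Prop where
  continuousOn : ContinuousOn ρ (Ici 0)
  concaveOn : ConcaveOn ℝ (Ici 0) ρ
  zero : ρ 0 = 0
  nonneg : ∀ t, 0 ≤ t → 0 ≤ ρ t

def SatisfiesGRS {E : Type*} [AddCommGroup E] [Module ℝ E] (ω : E → ℝ) : Prop :=
  ∀ x, Tendsto (fun n : ℕ => ω ((n : ℝ) • x) ^ ((n : ℝ)⁻¹)) atTop (𝓝 1)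

theorem isAdmissibleWeight_iff {d : ℕ} {ω : (Fin d → ℝ) → ℝ} :
    IsAdmissibleWeight ω ↔
      (∃ N ρ, IsNormFunction N ∧ IsWeightProfile ρ ∧ ω = fun x => Real.exp (ρ (N x))) ∧
        SatisfiesGRS ω := by
  constructor
  · rintro ⟨⟨N, ρ, h0, hz, hadd, hsmul, hc, hcc, hρ0, hρ, hω⟩, hGRS⟩
    exact ⟨⟨N, ρ, ⟨h0, hz, hadd, hsmul⟩, ⟨hc, hcc, hρ0, hρ⟩, funext hω⟩, hGRS⟩
  · rintro ⟨⟨N, ρ, ⟨h0, hz, hadd, hsmul⟩, ⟨hc, hcc, hρ0, hρ⟩, rfl⟩, hGRS⟩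
    exact ⟨⟨N, ρ, h0, hz, hadd, hsmul, hc, hcc, hρ0, hρ, fun _ => rfl⟩, hGRS⟩

theorem IsNormFunction.continuous {E : Type*} [NormedAddCommGroup E] [NormedSpace ℝ E]
    [FiniteDimensional ℝ E] {N : E → ℝ} (hN : IsNormFunction N) : Continuous N :=
  (Seminorm.of N hN.add_le fun c x => by rw [hN.smul, Real.norm_eq_abs]).convexOn
    |>.locallyLipschitz.continuous

theorem IsWeightProfile.min_mul {ρ : ℝ → ℝ} (hρ : IsWeightProfile ρ) {ε : ℝ} (hε : 0 ≤ ε) :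
    IsWeightProfile fun t => min (ρ t) (ε * t) where
  continuousOn := hρ.continuousOn.inf (continuous_const_mul ε).continuousOn
  concaveOn := hρ.concaveOn.inf <| (concaveOn_id (convex_Ici 0)).smul hε
  zero := by simp [hρ.zero]
  nonneg t ht := le_min (hρ.nonneg t ht) (mul_nonneg hε ht)

theorem ConcaveOn.div_le_div_of_le {ρ : ℝ → ℝ} (hρ : ConcaveOn ℝ (Ici 0) ρ) (h0 : ρ 0 = 0)
    {s t : ℝ} (hs : 0 < s) (hst : s ≤ t) : ρ t / t ≤ ρ s / s := by
  have h := hρ.neg.secant_mono (a := 0) self_mem_Ici hs.le (hs.le.trans hst) hs.ne'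
    (hs.trans_le hst).ne' hst
  simp only [Pi.neg_apply, h0, neg_zero, sub_zero, neg_div] at h
  exact neg_le_neg_iff.1 h

theorem ConcaveOn.eventually_le_mul {ρ : ℝ → ℝ} (hρ : ConcaveOn ℝ (Ici 0) ρ) (h0 : ρ 0 = 0)
    {a : ℝ} (ha : 0 < a) (hlim : Tendsto (fun n : ℕ => ρ (n * a) / n) atTop (𝓝 0))
    {ε : ℝ} (hε : 0 < ε) : ∀ᶠ t in atTop, ρ t ≤ ε * t := by
  obtain ⟨n, hn, hn1⟩ := ((hlim.div_const a).eventually (gt_mem_nhds (by simpa using hε))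
    |>.and (eventually_ge_atTop 1)).exists
  have hna : 0 < (n : ℝ) * a := mul_pos (by exact_mod_cast hn1) ha
  filter_upwards [eventually_ge_atTop ((n : ℝ) * a)] with t ht
  have hslope : ρ t / t < ε := calc
    ρ t / t ≤ ρ (n * a) / (n * a) := hρ.div_le_div_of_le h0 hna ht
    _ = ρ (n * a) / n / a := by rw [div_div]
    _ < ε := by simpa using hn
  rw [div_lt_iff₀ (hna.trans_le ht)] at hslope
  linarith

theorem ContinuousOn.exists_le_mul_add {ρ : ℝ → ℝ} (hc : ContinuousOn ρ (Ici 0)) {ε : ℝ}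
    (h : ∀ᶠ t in atTop, ρ t ≤ ε * t) : ∃ C, 0 ≤ C ∧ ∀ t, 0 ≤ t → ρ t ≤ ε * t + C := by
  obtain ⟨T, hT⟩ := eventually_atTop.1 h
  obtain ⟨C, hC⟩ := isCompact_Icc.exists_bound_of_continuousOn
    ((hc.mono Icc_subset_Ici_self).sub (continuous_const_mul ε).continuousOn)
  refine ⟨max C 0, le_max_right _ _, fun t ht => ?_⟩
  rcases le_total t T with htT | hTt
  · have : ρ t - ε * t ≤ C := (le_abs_self _).trans (hC t ⟨ht, htT⟩)
    linarith [le_max_left C 0]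
  · linarith [hT t hTt, le_max_right C 0]

theorem SatisfiesGRS.of_le {E : Type*} [AddCommGroup E] [Module ℝ E] {ω ω' : E → ℝ}
    (hω : SatisfiesGRS ω) (h1 : ∀ x, 1 ≤ ω' x) (hle : ∀ x, ω' x ≤ ω x) : SatisfiesGRS ω' :=
  fun x => tendsto_of_tendsto_of_tendsto_of_le_of_le tendsto_const_nhds (hω x)
    (fun _ => Real.one_le_rpow (h1 _) (by positivity))
    (fun _ => Real.rpow_le_rpow (zero_le_one.trans (h1 _)) (hle _) (by positivity))

theorem SatisfiesGRS.tendsto_div {E : Type*} [AddCommGroup E] [Module ℝ E] {N : E → ℝ}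
    {ρ : ℝ → ℝ} (hGRS : SatisfiesGRS fun x => Real.exp (ρ (N x))) (hN : IsNormFunction N)
    (x : E) : Tendsto (fun n : ℕ => ρ (n * N x) / n) atTop (𝓝 0) := by
  have hlog := (Real.continuousAt_log one_ne_zero).tendsto.comp (hGRS x)
  simp only [Function.comp_def, hN.smul, Nat.abs_cast, ← Real.exp_mul, Real.log_exp,
    Real.log_one] at hlog
  simpa only [div_eq_mul_inv] using hlog

theorem tendstoUniformlyOn_of_le_of_le {ι α : Type*} {l : Filter ι} {s : Set α}
    {F : ι → α → ℝ} {u : ι → ℝ} {c : ℝ} (hu : Tendsto u l (𝓝 c))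
    (hlo : ∀ i, ∀ x ∈ s, c ≤ F i x) (hhi : ∀ i, ∀ x ∈ s, F i x ≤ u i) :
    TendstoUniformlyOn F (fun _ => c) l s := by
  rw [Metric.tendstoUniformlyOn_iff]
  intro δ hδ
  filter_upwards [hu.eventually (gt_mem_nhds (lt_add_of_pos_right c hδ))] with i hi x hx
  rw [dist_comm, Real.dist_eq, abs_of_nonneg (sub_nonneg.2 (hlo i x hx))]
  linarith [hhi i x hx]

/-- Let `ω` be an unbounded admissible weight on `ℝ^d`.  Then there is a sequence of
admissible weights `ω_n` with (i) `ω_{n+1} ≤ ω_n ≤ ω`, (ii) `ω ≤ c_n ω_n` for some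
constants `c_n > 0`, and (iii) `ω_n → 1` uniformly on compact subsets of `ℝ^d`. -/
theorem exists_auxiliary_weights
    {d : ℕ} (ω : (Fin d → ℝ) → ℝ) (hadm : IsAdmissibleWeight ω)
    (hunb : ∀ M : ℝ, ∃ x, M < ω x) :
    ∃ ωs : ℕ → (Fin d → ℝ) → ℝ,
      (∀ n, IsAdmissibleWeight (ωs n)) ∧
      (∀ n x, ωs (n + 1) x ≤ ωs n x ∧ ωs n x ≤ ω x) ∧
      (∀ n, ∃ c : ℝ, 0 < c ∧ ∀ x, ω x ≤ c * ωs n x) ∧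
      (∀ s : Set (Fin d → ℝ), IsCompact s →
        TendstoUniformlyOn (fun n x => ωs n x) (fun _ => 1) atTop s) := by
  obtain ⟨⟨N, ρ, hN, hρ, rfl⟩, hGRS⟩ := isAdmissibleWeight_iff.1 hadm
  obtain ⟨x₀, hx₀⟩ := hunb 1
  have hNx₀ : 0 < N x₀ := (hN.nonneg x₀).lt_of_ne fun h => by simp [← h, hρ.zero] at hx₀
  have hε : ∀ n : ℕ, 0 < 1 / ((n : ℝ) + 1) := fun n => by positivity
  have hρn (n : ℕ) := hρ.min_mul (hε n).le
  have hone (n : ℕ) (x) : 1 ≤ Real.exp (min (ρ (N x)) (1 / ((n : ℝ) + 1) * N x)) :=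
    Real.one_le_exp ((hρn n).nonneg _ (hN.nonneg x))
  refine ⟨fun n x => Real.exp (min (ρ (N x)) (1 / ((n : ℝ) + 1) * N x)), fun n => ?_,
    fun n x => ⟨?_, ?_⟩, fun n => ?_, fun s hs => ?_⟩
  · exact isAdmissibleWeight_iff.2 ⟨⟨N, _, hN, hρn n, rfl⟩, hGRS.of_le (hone n)
      fun x => Real.exp_le_exp.2 (min_le_left _ _)⟩
  · have hNx := hN.nonneg x
    dsimp only
    gcongr
    simp
  · exact Real.exp_le_exp.2 (min_le_left _ _)
  · obtain ⟨C, hC0, hC⟩ := hρ.continuousOn.exists_le_mul_add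
      (hρ.concaveOn.eventually_le_mul hρ.zero hNx₀ (hGRS.tendsto_div hN x₀) (hε n))
    refine ⟨Real.exp C, Real.exp_pos C, fun x => ?_⟩
    rw [← Real.exp_add, Real.exp_le_exp, ← min_add_add_left]
    exact le_min (by linarith) ((hC _ (hN.nonneg x)).trans_eq (add_comm _ _))
  · obtain ⟨R, hR⟩ := hs.exists_bound_of_continuousOn hN.continuous.continuousOn
    refine tendstoUniformlyOn_of_le_of_le (u := fun n : ℕ => Real.exp (1 / ((n : ℝ) + 1) * R))
      ?_ (fun n x _ => hone n x) fun n x hx => ?_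
    · have := (Real.continuous_exp.tendsto _).comp
        ((tendsto_one_div_add_atTop_nhds_zero_nat (𝕜 := ℝ)).mul_const R)
      simpa [Function.comp_def] using this
    · exact Real.exp_le_exp.2 ((min_le_right _ _).trans
        (mul_le_mul_of_nonneg_left ((le_abs_self _).trans (hR x hx)) (hε n).le))
end

section
/- Let 0<p≤1, let ω be an unbounded admissible weight on ℤ^d satisfying the weak growth condition, and let (ω_n)_{n∈ℕ} be weights on ℤ^d such that 1 ≤ ω_{n+1}(x) ≤ ω_n(x) ≤ ω(x) for all n and x, ω_n → 1 uniformly on bounded subsets of ℤ^d as n→∞, and for each n there exists β_n > 0 with ω_n(x) = e^{−n} ω(x) whenever |x| ≥ β_n. Then for every matrix A ∈ A_{pω}, lim_{n→∞} ‖A‖_{pω_n} = ‖A‖_p. -/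
open scoped ENNReal NNReal
open Filter

/-!
Since `1 ≤ ω_n`, the norms `‖A‖_{pω_n}` never drop below `‖A‖_p`. For the upper bound fix `m`
and `δ > 0`: once `n ≥ m` is large, `ω_n ≤ 1 + δ` on the ball of radius `β_m` by uniform
convergence, while off that ball `ω_n ≤ ω_m = e^{-m} ω` by monotonicity. Hence
`‖A‖_{pω_n} ≤ (1 + δ)^p ‖A‖_p + e^{-mp} ‖A‖_{pω}`, and the right side tends to `‖A‖_p` as
`δ → 0` and `m → ∞` because `‖A‖_{pω}` is finite.
-/

lemma ENNReal.tsum_mul_le_add {ι : Type*} {a w w' : ι → ℝ≥0∞} {c e : ℝ≥0∞}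
    (h : ∀ i, w i ≤ c + e * w' i) :
    ∑' i, a i * w i ≤ c * ∑' i, a i + e * ∑' i, a i * w' i :=
  calc ∑' i, a i * w i ≤ ∑' i, (c * a i + e * (a i * w' i)) :=
        ENNReal.tsum_le_tsum fun i =>
          (mul_le_mul_right (h i) _).trans_eq (by ring)
    _ = c * ∑' i, a i + e * ∑' i, a i * w' i := by
        rw [ENNReal.tsum_add, ENNReal.tsum_mul_left, ENNReal.tsum_mul_left]

section MNorm

variable {d : ℕ}

lemma row_le_mnorm (p : ℝ) (ν : (Fin d → ℤ) → ℝ) (A : (Fin d → ℤ) → (Fin d → ℤ) → ℂ)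
    (k : Fin d → ℤ) :
    ∑' l, (‖A k l‖₊ : ℝ≥0∞) ^ p * ENNReal.ofReal (ν (k - l)) ^ p ≤ mnorm p ν A :=
  (le_iSup (fun k => ∑' l, (‖A k l‖₊ : ℝ≥0∞) ^ p * ENNReal.ofReal (ν (k - l)) ^ p) k).trans
    (le_max_left _ _)

lemma col_le_mnorm (p : ℝ) (ν : (Fin d → ℤ) → ℝ) (A : (Fin d → ℤ) → (Fin d → ℤ) → ℂ)
    (l : Fin d → ℤ) :
    ∑' k, (‖A k l‖₊ : ℝ≥0∞) ^ p * ENNReal.ofReal (ν (k - l)) ^ p ≤ mnorm p ν A :=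
  (le_iSup (fun l => ∑' k, (‖A k l‖₊ : ℝ≥0∞) ^ p * ENNReal.ofReal (ν (k - l)) ^ p) l).trans
    (le_max_right _ _)

lemma mnorm_mono_weight {p : ℝ} (hp : 0 ≤ p) {ν₁ ν₂ : (Fin d → ℤ) → ℝ} (h : ∀ x, ν₁ x ≤ ν₂ x)
    (A : (Fin d → ℤ) → (Fin d → ℤ) → ℂ) :
    mnorm p ν₁ A ≤ mnorm p ν₂ A :=
  max_le_max
    (iSup_mono fun _ => ENNReal.tsum_le_tsum fun _ =>
      mul_le_mul_right (ENNReal.rpow_le_rpow (ENNReal.ofReal_le_ofReal (h _)) hp) _)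
    (iSup_mono fun _ => ENNReal.tsum_le_tsum fun _ =>
      mul_le_mul_right (ENNReal.rpow_le_rpow (ENNReal.ofReal_le_ofReal (h _)) hp) _)

lemma mnorm_le_add {p : ℝ} {c e : ℝ≥0∞} {ν μ : (Fin d → ℤ) → ℝ}
    (h : ∀ x, ENNReal.ofReal (ν x) ^ p ≤ c + e * ENNReal.ofReal (μ x) ^ p)
    (A : (Fin d → ℤ) → (Fin d → ℤ) → ℂ) :
    mnorm p ν A ≤ c * mnorm p (fun _ => 1) A + e * mnorm p μ A := by
  refine max_le (iSup_le fun k => ?_) (iSup_le fun l => ?_)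
  · refine (ENNReal.tsum_mul_le_add fun l => h (k - l)).trans (add_le_add ?_ ?_)
    · simpa using mul_le_mul_right (row_le_mnorm p (fun _ => 1) A k) c
    · exact mul_le_mul_right (row_le_mnorm p μ A k) e
  · refine (ENNReal.tsum_mul_le_add fun k => h (k - l)).trans (add_le_add ?_ ?_)
    · simpa using mul_le_mul_right (col_le_mnorm p (fun _ => 1) A l) c
    · exact mul_le_mul_right (col_le_mnorm p μ A l) e

lemma mnorm_le_of_le_max {p : ℝ} (hp : 0 ≤ p) {c e : ℝ} (he : 0 ≤ e) {ν μ : (Fin d → ℤ) → ℝ}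
    (h : ∀ x, ν x ≤ max c (e * μ x)) (A : (Fin d → ℤ) → (Fin d → ℤ) → ℂ) :
    mnorm p ν A ≤
      ENNReal.ofReal c ^ p * mnorm p (fun _ => 1) A + ENNReal.ofReal e ^ p * mnorm p μ A := by
  refine mnorm_le_add (fun x => ?_) A
  rcases le_max_iff.mp (h x) with hc | hμ
  · exact le_add_right (ENNReal.rpow_le_rpow (ENNReal.ofReal_le_ofReal hc) hp)
  · refine le_add_left ?_
    calc ENNReal.ofReal (ν x) ^ p ≤ ENNReal.ofReal (e * μ x) ^ p :=
          ENNReal.rpow_le_rpow (ENNReal.ofReal_le_ofReal hμ) hp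
      _ = ENNReal.ofReal e ^ p * ENNReal.ofReal (μ x) ^ p := by
          rw [ENNReal.ofReal_mul he, ENNReal.mul_rpow_of_nonneg _ _ hp]

end MNorm

lemma eventually_le_max_of_tendstoUniformlyOn {ι : Type*} {f : ℕ → ι → ℝ} {μ : ι → ℝ}
    {s : Set ι} (hanti : ∀ i, Antitone fun n => f n i)
    (hunif : TendstoUniformlyOn f (fun _ => 1) atTop s) {m : ℕ} (htail : ∀ i ∉ s, f m i ≤ μ i)
    {δ : ℝ} (hδ : 0 < δ) :
    ∀ᶠ n in atTop, ∀ i, f n i ≤ max (1 + δ) (μ i) := by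
  filter_upwards [Metric.tendstoUniformlyOn_iff.mp hunif δ hδ, eventually_ge_atTop m]
    with n hnear hmn i
  by_cases hi : i ∈ s
  · have := (abs_lt.mp (Real.dist_eq _ _ ▸ hnear i hi)).1
    exact le_max_of_le_left (by linarith)
  · exact le_max_of_le_right ((hanti i hmn).trans (htail i hi))

lemma tendsto_ofReal_rpow_mul_add {p : ℝ} (hp : 0 < p) (S : ℝ≥0∞) {W : ℝ≥0∞} (hW : W ≠ ⊤) :
    Tendsto (fun t : ℝ => ENNReal.ofReal (1 + t) ^ p * S + ENNReal.ofReal t ^ p * W)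
      (nhds 0) (nhds S) := by
  have hcont : Continuous fun x : ℝ => ENNReal.ofReal x ^ p :=
    (ENNReal.continuous_rpow_const).comp ENNReal.continuous_ofReal
  have hone : Tendsto (fun t : ℝ => ENNReal.ofReal (1 + t) ^ p) (nhds 0) (nhds 1) :=
    (hcont.comp (continuous_const.add continuous_id)).tendsto' 0 1 (by simp)
  have hzero : Tendsto (fun t : ℝ => ENNReal.ofReal t ^ p) (nhds 0) (nhds 0) :=
    hcont.tendsto' 0 0 (by simp [hp])
  simpa using (ENNReal.Tendsto.mul_const hone (Or.inl one_ne_zero)).add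
    (ENNReal.Tendsto.mul_const hzero (Or.inr hW))

theorem tendsto_mnorm_auxiliary_weights_general
    {d : ℕ} (p : ℝ) (hp0 : 0 < p)
    (ω : (Fin d → ℝ) → ℝ)
    (ωs : ℕ → (Fin d → ℤ) → ℝ)
    (hmono : ∀ n k, 1 ≤ ωs (n + 1) k ∧ ωs (n + 1) k ≤ ωs n k ∧ ωs n k ≤ ω (zr k))
    (hub : ∀ R : ℝ, 0 < R →
      TendstoUniformlyOn (fun n k => ωs n k) (fun _ => 1) atTop {k | ‖zr k‖ ≤ R})
    (htail : ∀ n : ℕ, ∃ β : ℝ, 0 < β ∧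
      ∀ k : Fin d → ℤ, β ≤ ‖zr k‖ → ωs n k = Real.exp (-(n : ℝ)) * ω (zr k))
    (A : (Fin d → ℤ) → (Fin d → ℤ) → ℂ)
    (hA : mnorm p (fun k => ω (zr k)) A < ⊤) :
    Tendsto (fun n : ℕ => mnorm p (ωs n) A) atTop (nhds (mnorm p (fun _ => 1) A)) := by
  have hone : ∀ n k, 1 ≤ ωs n k := fun n k => (hmono n k).1.trans (hmono n k).2.1
  have hanti : ∀ k, Antitone fun n => ωs n k := fun k =>
    antitone_nat_of_succ_le fun n => (hmono n k).2.1
  have hbound : ∀ m : ℕ, ∀ᶠ n in atTop, mnorm p (ωs n) A ≤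
      ENNReal.ofReal (1 + Real.exp (-m)) ^ p * mnorm p (fun _ => 1) A +
        ENNReal.ofReal (Real.exp (-m)) ^ p * mnorm p (fun k => ω (zr k)) A := by
    intro m
    obtain ⟨β, hβ, hβtail⟩ := htail m
    filter_upwards [eventually_le_max_of_tendstoUniformlyOn hanti (hub β hβ)
      (μ := fun k => Real.exp (-m) * ω (zr k))
      (fun k hk => (hβtail k (not_le.mp hk).le).le) (Real.exp_pos (-m))] with n hn
    exact mnorm_le_of_le_max hp0.le (Real.exp_pos _).le hn A
  have hexp : Tendsto (fun m : ℕ => Real.exp (-m)) atTop (nhds 0) :=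
    Real.tendsto_exp_neg_atTop_nhds_zero.comp tendsto_natCast_atTop_atTop
  refine tendsto_of_le_liminf_of_limsup_le ?_ ?_
  · exact le_liminf_of_le (by isBoundedDefault)
      (Eventually.of_forall fun n => mnorm_mono_weight hp0.le (hone n) A)
  · exact ge_of_tendsto ((tendsto_ofReal_rpow_mul_add hp0 _ hA.ne).comp hexp)
      (Eventually.of_forall fun m => limsup_le_of_le (by isBoundedDefault) (hbound m))

/-- Let `0 < p ≤ 1`, `ω` an unbounded admissible weight on `ℤ^d` with the weak growth
condition, and `(ω_n)` weights on `ℤ^d` with `1 ≤ ω_{n+1} ≤ ω_n ≤ ω`, `ω_n → 1` uniformly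
on bounded sets, and `ω_n = e^{−n} ω` outside a ball of radius `β_n`.  Then for every
`A ∈ A_{pω}`, `lim_n ‖A‖_{pω_n} = ‖A‖_p`. -/
theorem tendsto_mnorm_auxiliary_weights
    {d : ℕ} (p : ℝ) (hp0 : 0 < p) (hp1 : p ≤ 1)
    (ω : (Fin d → ℝ) → ℝ) (hadm : IsAdmissibleWeight ω) (hwg : WeakGrowth ω)
    (hunb : ∀ M : ℝ, ∃ x, M < ω x)
    (ωs : ℕ → (Fin d → ℤ) → ℝ)
    (hmono : ∀ n k, 1 ≤ ωs (n + 1) k ∧ ωs (n + 1) k ≤ ωs n k ∧ ωs n k ≤ ω (zr k))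
    (hub : ∀ R : ℝ, 0 < R →
      TendstoUniformlyOn (fun n k => ωs n k) (fun _ => 1) atTop {k | ‖zr k‖ ≤ R})
    (htail : ∀ n : ℕ, ∃ β : ℝ, 0 < β ∧
      ∀ k : Fin d → ℤ, β ≤ ‖zr k‖ → ωs n k = Real.exp (-(n : ℝ)) * ω (zr k))
    (A : (Fin d → ℤ) → (Fin d → ℤ) → ℂ)
    (hA : mnorm p (fun k => ω (zr k)) A < ⊤) :
    Tendsto (fun n : ℕ => mnorm p (ωs n) A) atTop (nhds (mnorm p (fun _ => 1) A)) :=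
  tendsto_mnorm_auxiliary_weights_general p hp0 ω ωs hmono hub htail A hA
end
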